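/- arXiv:math/0005278 — 8 statements merged into one kernel-verified Lean document; each statement's English description precedes it below -/
import Mathlib

section
/- The class of compact operators is ∼closed: if (Tₙ) is a sequence of compact operators from a Banach space X (to possibly varying Banach spaces) and T : X → Y is a bounded operator such that ‖Tₙx‖ → ‖Tx‖ uniformly on the closed unit ball of X, then T is compact. -/
/-- The class of compact operators is `∼`closed: if `Tₙ : X → Yₙ` are compact operators and
`T : X → Z` is bounded with `‖Tₙ x‖ → ‖T x‖` uniformly on the closed unit ball of `X`,
then `T` is compact. -/
theorem stmt_2 {X Z : Type*}
    [NormedAddCommGroup X] [NormedSpace ℝ X] [CompleteSpace X]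
    [NormedAddCommGroup Z] [NormedSpace ℝ Z] [CompleteSpace Z]
    {Y : ℕ → Type*} [∀ n, NormedAddCommGroup (Y n)] [∀ n, NormedSpace ℝ (Y n)]
    [∀ n, CompleteSpace (Y n)]
    (T : ∀ n, X →L[ℝ] Y n) (hT : ∀ n, IsCompactOperator (T n))
    (S : X →L[ℝ] Z)
    (hconv : ∀ ε > (0 : ℝ), ∃ N : ℕ, ∀ n ≥ N, ∀ x ∈ Metric.closedBall (0 : X) 1,
      |‖T n x‖ - ‖S x‖| < ε) :
    IsCompactOperator S := by
  have key : IsCompactOperator ⇑(S : X →ₗ[ℝ] Z) → IsCompactOperator ⇑S := fun h => h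
  apply key
  rw [isCompactOperator_iff_isCompact_closure_image_closedBall (𝕜₁ := ℝ)
    (S : X →ₗ[ℝ] Z) one_pos]
  show IsCompact (closure (⇑S '' Metric.closedBall (0 : X) 1))
  have htb : TotallyBounded (⇑S '' Metric.closedBall (0 : X) 1) := by
    rw [Metric.totallyBounded_iff]
    intro ε hε
    obtain ⟨N, hN⟩ := hconv (ε / 4) (by linarith)
    -- the image of the unit ball under T N is totally bounded
    obtain ⟨K, hK, hKsub⟩ :=
      (hT N).image_closedBall_subset_compact (𝕜₁ := ℝ) (f := (T N : X →ₛₗ[RingHom.id ℝ] Y N)) 1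
    have htbN : TotallyBounded (⇑(T N) '' Metric.closedBall (0 : X) 1) :=
      hK.totallyBounded.subset hKsub
    obtain ⟨t, hts, htf, htcov⟩ := Metric.finite_approx_of_totallyBounded htbN (ε / 4) (by linarith)
    -- choose preimages for points of t
    choose g hg1 hg2 using fun y (hy : y ∈ t) => hts hy
    classical
    refine ⟨(fun y => if hy : y ∈ t then S (g y hy) else 0) '' t, htf.image _, ?_⟩
    rintro _ ⟨x, hx, rfl⟩
    obtain ⟨y, hy, hxy⟩ := Set.mem_iUnion₂.1 (htcov ⟨x, hx, rfl⟩)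
    have hgy := hg1 y hy
    have hTgy : T N (g y hy) = y := hg2 y hy
    refine Set.mem_iUnion₂.2 ⟨_, Set.mem_image_of_mem _ hy, ?_⟩
    rw [dif_pos hy]
    -- estimate ‖S x - S (g y hy)‖
    have hxball : ‖x‖ ≤ 1 := by simpa [Metric.mem_closedBall, dist_eq_norm] using hx
    have hgyball : ‖g y hy‖ ≤ 1 := by simpa [Metric.mem_closedBall, dist_eq_norm] using hgy
    set z : X := (2⁻¹ : ℝ) • (x - g y hy) with hz
    have hzball : z ∈ Metric.closedBall (0 : X) 1 := by
      simp only [Metric.mem_closedBall, dist_zero_right, hz, norm_smul]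
      have : ‖x - g y hy‖ ≤ 2 := le_trans (norm_sub_le _ _) (by linarith)
      rw [norm_inv]
      simp only [Real.norm_ofNat]
      nlinarith [this]
    have hTz := hN N le_rfl z hzball
    have hTngxy : ‖T N x - T N (g y hy)‖ < ε / 4 := by
      rw [hTgy]
      simpa [dist_eq_norm] using hxy
    have hTzn : ‖T N z‖ = 2⁻¹ * ‖T N x - T N (g y hy)‖ := by
      rw [hz, map_smul, norm_smul, map_sub]
      simp
    have hSzn : ‖S z‖ = 2⁻¹ * ‖S x - S (g y hy)‖ := by
      rw [hz, map_smul, norm_smul, map_sub]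
      simp
    rw [Metric.mem_ball, dist_eq_norm]
    have habs : |‖T N z‖ - ‖S z‖| < ε / 4 := hTz
    have h1 : ‖S z‖ < ‖T N z‖ + ε / 4 := by
      cases abs_lt.1 habs with
      | intro h1 h2 => linarith
    rw [hSzn, hTzn] at h1
    nlinarith [norm_nonneg (S x - S (g y hy))]
  exact TotallyBounded.isCompact_of_isClosed htb.closure isClosed_closure
end

section
/- Every compact operator T : X → Y between Banach spaces lies in the ∼closure of the finite-rank operators: for every ε > 0 there exists a finite-rank bounded operator F from X (to some Banach space) such that |‖Fx‖ − ‖Tx‖| ≤ ε for all x in the closed unit ball of X. -/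
/-- Every compact operator `T : X → Y` between Banach spaces lies in the `∼`closure of the
finite-rank operators: for every `ε > 0` there is a bounded finite-rank operator `F` from `X`
to some Banach space such that `|‖F x‖ - ‖T x‖| ≤ ε` on the closed unit ball of `X`. -/
theorem stmt_3 {X Y : Type*}
    [NormedAddCommGroup X] [NormedSpace ℝ X] [CompleteSpace X]
    [NormedAddCommGroup Y] [NormedSpace ℝ Y] [CompleteSpace Y]
    (T : X →L[ℝ] Y) (hT : IsCompactOperator T) (ε : ℝ) (hε : 0 < ε) :
    ∃ (Z : Type) (_ : NormedAddCommGroup Z) (_ : NormedSpace ℝ Z) (_ : CompleteSpace Z)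
      (F : X →L[ℝ] Z),
      FiniteDimensional ℝ (LinearMap.range (F : X →ₗ[ℝ] Z)) ∧
      ∀ x ∈ Metric.closedBall (0 : X) 1, |‖F x‖ - ‖T x‖| ≤ ε := by
  -- the closure of the image of the unit ball is compact
  have hK : IsCompact (closure (T '' Metric.closedBall 0 1)) :=
    IsCompactOperator.isCompact_closure_image_closedBall (𝕜₁ := ℝ)
      (f := (T : X →ₗ[ℝ] Y)) hT 1
  -- hence totally bounded: finite ε/2-net
  have htb : TotallyBounded (T '' Metric.closedBall 0 1) :=
    (hK.totallyBounded).subset subset_closure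
  obtain ⟨t, htfin, hcover⟩ := (Metric.totallyBounded_iff.mp htb) (ε / 2) (by linarith)
  have : Fintype t := htfin.fintype
  set n := Fintype.card t with hn
  obtain e := (Fintype.equivFin t)
  set c : Fin n → Y := fun i => (e.symm i : Y) with hc
  -- choose norming (≤ 1) functionals for each center
  have hdual : ∀ i : Fin n, ∃ g : Y →L[ℝ] ℝ, ‖g‖ ≤ 1 ∧ g (c i) = ‖c i‖ := fun i =>
    exists_dual_vector'' ℝ (c i)
  choose f hf1 hf2 using hdual
  -- the finite rank operator
  refine ⟨Fin n → ℝ, inferInstance, inferInstance, inferInstance,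
    ContinuousLinearMap.pi (fun i => (f i).comp T), inferInstance, ?_⟩
  intro x hx
  set Fx : Fin n → ℝ := fun i => f i (T x) with hFx
  have hball : T x ∈ ⋃ y ∈ t, Metric.ball y (ε / 2) :=
    hcover ⟨x, hx, rfl⟩
  simp only [Set.mem_iUnion] at hball
  obtain ⟨y, hyt, hy⟩ := hball
  -- upper bound : ‖F x‖ ≤ ‖T x‖
  have hub : ‖(ContinuousLinearMap.pi (fun i => (f i).comp T)) x‖ ≤ ‖T x‖ := by
    apply pi_norm_le_iff_of_nonneg (norm_nonneg _) |>.mpr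
    intro i
    calc ‖f i (T x)‖ ≤ ‖f i‖ * ‖T x‖ := (f i).le_opNorm _
      _ ≤ 1 * ‖T x‖ := by gcongr; exact hf1 i
      _ = ‖T x‖ := one_mul _
  -- lower bound
  set j : Fin n := e ⟨y, hyt⟩ with hj
  have hcj : c j = y := by simp [hc, hj]
  have hlb : ‖T x‖ - ε ≤ ‖(ContinuousLinearMap.pi (fun i => (f i).comp T)) x‖ := by
    have h1 : ‖f j (T x) - f j (c j)‖ ≤ ε / 2 := by
      rw [← map_sub]
      calc ‖f j (T x - c j)‖ ≤ ‖f j‖ * ‖T x - c j‖ := (f j).le_opNorm _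
        _ ≤ 1 * (ε / 2) := by
            apply mul_le_mul (hf1 j) ?_ (norm_nonneg _) zero_le_one
            rw [hcj]
            exact le_of_lt (by simpa [dist_eq_norm] using hy)
        _ = ε / 2 := one_mul _
    have h2 : ‖T x‖ ≤ ‖c j‖ + ε / 2 := by
      have : ‖T x - c j‖ ≤ ε / 2 := by
        rw [hcj]; exact le_of_lt (by simpa [dist_eq_norm] using hy)
      calc ‖T x‖ = ‖c j + (T x - c j)‖ := by rw [add_sub_cancel]
        _ ≤ ‖c j‖ + ‖T x - c j‖ := norm_add_le _ _
        _ ≤ ‖c j‖ + ε / 2 := by linarith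
    have h3 : ‖c j‖ - ε / 2 ≤ f j (T x) := by
      have := hf2 j
      have habs : f j (c j) - f j (T x) ≤ ε / 2 := by
        have := h1
        rw [Real.norm_eq_abs, abs_sub_comm] at this
        linarith [abs_le.mp this |>.2]
      linarith [hf2 j]
    have h4 : f j (T x) ≤ ‖f j (T x)‖ := le_abs_self _
    have h5 : ‖f j (T x)‖ ≤ ‖(ContinuousLinearMap.pi (fun i => (f i).comp T)) x‖ :=
      norm_le_pi_norm (fun i => f i (T x)) j
    linarith
  rw [abs_le]
  constructor <;> linarith
end

section
/- Let M₁ ⊆ M₂ be classes of (equivalence classes of) operators on X containing 0, where M₁ is a subsemigroup under +̃. Then M₂ −̃ (M₂ −̃ M₁) is again a subsemigroup under +̃. In particular M₂ −̃ (M₂ −̃ (M₂ −̃ M₁)) = M₂ −̃ M₁. -/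
/-- Operators on `X` are identified with the functions `x ↦ ‖T x‖`; the sum `T₁ +̃ T₂`
corresponds to pointwise addition and `opDiff M₂ M₁ = M₂ −̃ M₁`. -/
def opDiff {X : Type*} (M₂ M₁ : Set (X → ℝ)) : Set (X → ℝ) :=
  {f | ∀ g ∈ M₁, f + g ∈ M₂}

/-- If `M₁ ⊆ M₂` contain `0` and `M₁` is a subsemigroup under `+̃`, then
`M₂ −̃ (M₂ −̃ M₁)` is again a subsemigroup, and moreover
`M₂ −̃ (M₂ −̃ (M₂ −̃ M₁)) = M₂ −̃ M₁`. -/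
theorem stmt_6 {X : Type*} [NormedAddCommGroup X]
    (M₁ M₂ : Set (X → ℝ)) (h₁ : (0 : X → ℝ) ∈ M₁) (h₂ : (0 : X → ℝ) ∈ M₂)
    (hsub : M₁ ⊆ M₂)
    (hsemi : ∀ f ∈ M₁, ∀ g ∈ M₁, f + g ∈ M₁) :
    (∀ f ∈ opDiff M₂ (opDiff M₂ M₁), ∀ g ∈ opDiff M₂ (opDiff M₂ M₁),
        f + g ∈ opDiff M₂ (opDiff M₂ M₁)) ∧
      opDiff M₂ (opDiff M₂ (opDiff M₂ M₁)) = opDiff M₂ M₁ := by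
  constructor
  · intro f hf g hg h hh
    -- show g + h ∈ opDiff M₂ M₁ first
    have hgh : g + h ∈ opDiff M₂ M₁ := by
      intro m hm
      have hhm : h + m ∈ opDiff M₂ M₁ := by
        intro m' hm'
        have := hh (m + m') (hsemi m hm m' hm')
        simpa [add_assoc] using this
      have := hg (h + m) hhm
      simpa [add_assoc] using this
    have := hf (g + h) hgh
    simpa [add_assoc] using this
  · apply Set.Subset.antisymm
    · intro f hf m hm
      have hmdd : m ∈ opDiff M₂ (opDiff M₂ M₁) := by
        intro g hg
        have := hg m hm
        simpa [add_comm] using this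
      exact hf m hmdd
    · intro f hf g hg
      have := hg f hf
      simpa [add_comm] using this
end

section
/- Let M be a class of (equivalence classes of) operators on X such that 0 ∈ M and every element of M is contained in some subsemigroup of M. Then the intersection of all maximal subsemigroups of M equals M −̃ M = {T : T +̃ S ∈ M for all S ∈ M}. -/
/-- `S` is a maximal subsemigroup of `M`: `S ⊆ M` is closed under `+̃`, and any
subsemigroup of `M` including `S` coincides with `S`. -/
def IsMaxSubsemigroup {X : Type*} (M S : Set (X → ℝ)) : Prop :=
  S ⊆ M ∧ (∀ f ∈ S, ∀ g ∈ S, f + g ∈ S) ∧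
    ∀ S' : Set (X → ℝ), S' ⊆ M → (∀ f ∈ S', ∀ g ∈ S', f + g ∈ S') → S ⊆ S' → S' = S

/-- If `0 ∈ M` and every element of `M` lies in some subsemigroup of `M`, then the
central part of `M` (the intersection of all maximal subsemigroups of `M`)
equals `M −̃ M`. -/
theorem stmt_7 {X : Type*} [NormedAddCommGroup X]
    (M : Set (X → ℝ)) (h0 : (0 : X → ℝ) ∈ M)
    (hmem : ∀ f ∈ M, ∃ S : Set (X → ℝ), S ⊆ M ∧ (∀ g ∈ S, ∀ h ∈ S, g + h ∈ S) ∧ f ∈ S) :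
    ⋂₀ {S : Set (X → ℝ) | IsMaxSubsemigroup M S} = opDiff M M := by
  ext f
  simp only [Set.mem_sInter, Set.mem_setOf_eq]
  constructor
  · -- f in all maximal subsemigroups → f ∈ M −̃ M
    intro hf g hg
    obtain ⟨S₀, hS₀M, hS₀c, hgS₀⟩ := hmem g hg
    obtain ⟨m, hS₀m, hmmem, hmmax⟩ := zorn_subset_nonempty
      {S : Set (X → ℝ) | S ⊆ M ∧ ∀ a ∈ S, ∀ b ∈ S, a + b ∈ S}
      (fun c hc hchain hne => by
        refine ⟨⋃₀ c, ⟨?_, ?_⟩, fun s hs => Set.subset_sUnion_of_mem hs⟩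
        · exact Set.sUnion_subset fun s hs => (hc hs).1
        · rintro a ⟨s₁, hs₁, ha⟩ b ⟨s₂, hs₂, hb⟩
          rcases hchain.total hs₁ hs₂ with h | h
          · exact ⟨s₂, hs₂, (hc hs₂).2 a (h ha) b hb⟩
          · exact ⟨s₁, hs₁, (hc hs₁).2 a ha b (h hb)⟩)
      S₀ ⟨hS₀M, hS₀c⟩
    have hmax : IsMaxSubsemigroup M m := by
      refine ⟨hmmem.1, hmmem.2, fun S' hS'M hS'c hmS' => ?_⟩
      exact Set.Subset.antisymm (hmmax ⟨hS'M, hS'c⟩ hmS') hmS'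
    have hfm : f ∈ m := hf m hmax
    exact hmmem.1 (hmmem.2 f hfm g (hS₀m hgS₀))
  · -- f ∈ M −̃ M → f in every maximal subsemigroup
    intro hf S hS
    obtain ⟨hSM, hSc, hSmax⟩ := hS
    set D : Set (X → ℝ) := opDiff M M with hD
    have hDM : D ⊆ M := fun d hd => by
      have := hd 0 h0; rwa [add_zero] at this
    set S' : Set (X → ℝ) := S ∪ D ∪ {h | ∃ s ∈ S, ∃ d ∈ D, h = s + d} with hS'
    have hS'M : S' ⊆ M := by
      rintro h ((h1 | h2) | ⟨s, hs, d, hd, rfl⟩)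
      · exact hSM h1
      · exact hDM h2
      · have := hd s (hSM hs)
        rwa [add_comm] at this
    have hDc : ∀ a ∈ D, ∀ b ∈ D, a + b ∈ D := by
      intro a ha b hb g hg
      have : b + g ∈ M := hb g hg
      have := ha (b + g) this
      rwa [← add_assoc] at this
    have hS'c : ∀ a ∈ S', ∀ b ∈ S', a + b ∈ S' := by
      rintro a ((ha | ha) | ⟨s, hs, d, hd, rfl⟩) b ((hb | hb) | ⟨t, ht, e, he, rfl⟩)
      · exact Or.inl (Or.inl (hSc a ha b hb))
      · exact Or.inr ⟨a, ha, b, hb, rfl⟩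
      · refine Or.inr ⟨a + t, hSc a ha t ht, e, he, by abel⟩
      · refine Or.inr ⟨b, hb, a, ha, by abel⟩
      · exact Or.inl (Or.inr (hDc a ha b hb))
      · refine Or.inr ⟨t, ht, a + e, hDc a ha e he, by abel⟩
      · refine Or.inr ⟨s + b, hSc s hs b hb, d, hd, by abel⟩
      · refine Or.inr ⟨s, hs, d + b, hDc d hd b hb, by abel⟩
      · refine Or.inr ⟨s + t, hSc s hs t ht, d + e, hDc d hd e he, by abel⟩
    have hSS' : S ⊆ S' := fun s hs => Or.inl (Or.inl hs)
    have := hSmax S' hS'M hS'c hSS'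
    rw [← this]
    exact Or.inl (Or.inr hf)
end

section
/- If T : X → X is a strong Daugavet operator on a Banach space X, then T satisfies the Daugavet equation ‖Id + T‖ = 1 + ‖T‖. -/
/-- If `T : X → X` is a strong Daugavet operator on a Banach space `X`, then `T`
satisfies the Daugavet equation `‖Id + T‖ = 1 + ‖T‖`. -/
theorem stmt_9 {X : Type*} [NormedAddCommGroup X] [NormedSpace ℝ X] [CompleteSpace X]
    [Nontrivial X] (T : X →L[ℝ] X)
    (hSD : ∀ x y : X, ‖x‖ = 1 → ‖y‖ = 1 → ∀ ε > (0 : ℝ),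
      ∃ z : X, ‖z‖ = 1 ∧ ‖T (z - y)‖ < ε ∧ 2 - ε < ‖z + x‖) :
    ‖ContinuousLinearMap.id ℝ X + T‖ = 1 + ‖T‖ := by
  refine le_antisymm ((norm_add_le _ _).trans (by rw [ContinuousLinearMap.norm_id])) ?_
  refine le_of_forall_sub_le fun δ hδ => ?_
  by_cases hT : T = 0
  · subst hT
    simp only [add_zero, norm_zero, ContinuousLinearMap.norm_id]
    linarith
  have hTn : 0 < ‖T‖ := norm_pos_iff.mpr hT
  set ε : ℝ := min (‖T‖ / 2) (δ / (3 + ‖T‖)) with hε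
  have hε0 : 0 < ε := lt_min (by linarith) (div_pos hδ (by linarith))
  have hε1 : ε ≤ ‖T‖ / 2 := min_le_left _ _
  have hε2 : ε ≤ δ / (3 + ‖T‖) := min_le_right _ _
  -- find a near-norming unit vector y
  obtain ⟨w, hw⟩ := T.exists_mul_lt_of_lt_opNorm (r := ‖T‖ - ε) (by linarith) (by linarith)
  have hw0 : w ≠ 0 := by
    rintro rfl
    simp at hw
  have hwn : 0 < ‖w‖ := norm_pos_iff.mpr hw0
  set y : X := ‖w‖⁻¹ • w with hy
  have hy1 : ‖y‖ = 1 := by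
    rw [hy, norm_smul, norm_inv, norm_norm, inv_mul_cancel₀ hwn.ne']
  have hTy : ‖T‖ - ε < ‖T y‖ := by
    rw [hy, map_smul, norm_smul, norm_inv, norm_norm]
    rw [inv_mul_eq_div, lt_div_iff₀ hwn]
    linarith [hw]
  set a : ℝ := ‖T y‖ with ha
  have ha0 : 0 < a := by
    have : 0 < ‖T‖ - ε := by linarith
    linarith
  have haT : a ≤ ‖T‖ := by
    calc a ≤ ‖T‖ * ‖y‖ := T.le_opNorm y
    _ = ‖T‖ := by rw [hy1, mul_one]
  set x : X := a⁻¹ • T y with hx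
  have hx1 : ‖x‖ = 1 := by
    rw [hx, norm_smul, norm_inv, norm_norm, ← ha, inv_mul_cancel₀ ha0.ne']
  obtain ⟨z, hz1, hz2, hz3⟩ := hSD x y hx1 hy1 ε hε0
  have hax : a • x = T y := by
    rw [hx, smul_smul, mul_inv_cancel₀ ha0.ne', one_smul]
  -- key estimate: ‖z + T y‖ ≥ 1 + a - ε * max 1 ‖T‖
  have key : 1 + a - ε * max 1 ‖T‖ ≤ ‖z + T y‖ := by
    rcases le_or_gt a 1 with hca | hca
    · -- z + T y = (z + x) + (a - 1) • x
      have hdec : z + T y = (z + x) + (a - 1) • x := by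
        rw [sub_smul, one_smul, hax]; abel
      have : ‖z + x‖ - ‖(a - 1) • x‖ ≤ ‖z + T y‖ := by
        rw [hdec]
        have := norm_sub_norm_le (z + x) (-((a - 1) • x))
        simpa [sub_neg_eq_add] using this
      have hn : ‖(a - 1) • x‖ = 1 - a := by
        rw [norm_smul, hx1, mul_one, Real.norm_eq_abs, abs_of_nonpos (by linarith), neg_sub]
      have hmax : ε ≤ ε * max 1 ‖T‖ := le_mul_of_one_le_right hε0.le (le_max_left _ _)
      rw [hn] at this
      linarith
    · -- z + T y = a • (z + x) + (1 - a) • z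
      have hdec : z + T y = a • (z + x) + (1 - a) • z := by
        rw [smul_add, sub_smul, one_smul, hax]; abel
      have : ‖a • (z + x)‖ - ‖(1 - a) • z‖ ≤ ‖z + T y‖ := by
        rw [hdec]
        have := norm_sub_norm_le (a • (z + x)) (-((1 - a) • z))
        simpa [sub_neg_eq_add] using this
      have h1 : ‖a • (z + x)‖ = a * ‖z + x‖ := by
        rw [norm_smul, Real.norm_eq_abs, abs_of_pos ha0]
      have h2 : ‖(1 - a) • z‖ = a - 1 := by
        rw [norm_smul, hz1, mul_one, Real.norm_eq_abs, abs_of_nonpos (by linarith), neg_sub]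
      have h3 : a * (2 - ε) ≤ a * ‖z + x‖ :=
        mul_le_mul_of_nonneg_left hz3.le ha0.le
      have hmax : ε * a ≤ ε * max 1 ‖T‖ :=
        mul_le_mul_of_nonneg_left (haT.trans (le_max_right _ _)) hε0.le
      nlinarith
  -- conclude
  have hzTz : 1 + ‖T‖ - ε * (3 + ‖T‖) ≤ ‖z + T z‖ := by
    have h1 : ‖z + T y‖ - ‖T z - T y‖ ≤ ‖z + T z‖ := by
      have := norm_sub_norm_le (z + T y) (T y - T z)
      have heq : (z + T y) - (T y - T z) = z + T z := by abel
      rw [heq, norm_sub_rev] at this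
      linarith [this]
    have h2 : ‖T z - T y‖ < ε := by rwa [← map_sub]
    have hmax : ε * max 1 ‖T‖ ≤ ε * (1 + ‖T‖) := by
      apply mul_le_mul_of_nonneg_left _ hε0.le
      exact max_le (by linarith) (by linarith)
    nlinarith
  have hfin : ‖z + T z‖ ≤ ‖ContinuousLinearMap.id ℝ X + T‖ := by
    have := (ContinuousLinearMap.id ℝ X + T).le_opNorm z
    simpa [hz1] using this
  have hδ' : ε * (3 + ‖T‖) ≤ δ := by
    have h3 : (0:ℝ) < 3 + ‖T‖ := by linarith
    calc ε * (3 + ‖T‖) ≤ δ / (3 + ‖T‖) * (3 + ‖T‖) :=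
          mul_le_mul_of_nonneg_right hε2 h3.le
      _ = δ := div_mul_cancel₀ δ h3.ne'
  linarith
end

section
/- A bounded operator T on a Banach space X is a strong Daugavet operator if and only if for every pair x, y ∈ S(X) and every ε > 0 there exists z ∈ D(x, y, ε) with ‖Tz‖ < ε, where D(x, y, ε) = {z : ‖z + x + y‖ > 2 − ε and ‖z + y‖ < 1 + ε}. -/
/-- A bounded operator `T` on a Banach space `X` is a strong Daugavet operator iff for every
`x, y` in the unit sphere and every `ε > 0` there is `z ∈ D(x, y, ε)` with `‖T z‖ < ε`,
where `D(x, y, ε) = {z : ‖z + x + y‖ > 2 - ε ∧ ‖z + y‖ < 1 + ε}`. -/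
theorem stmt_10 {X Y : Type*}
    [NormedAddCommGroup X] [NormedSpace ℝ X] [CompleteSpace X]
    [NormedAddCommGroup Y] [NormedSpace ℝ Y] [CompleteSpace Y]
    (T : X →L[ℝ] Y) :
    (∀ x y : X, ‖x‖ = 1 → ‖y‖ = 1 → ∀ ε > (0 : ℝ),
        ∃ z : X, ‖z‖ = 1 ∧ ‖T (z - y)‖ < ε ∧ 2 - ε < ‖z + x‖) ↔
      ∀ x y : X, ‖x‖ = 1 → ‖y‖ = 1 → ∀ ε > (0 : ℝ),
        ∃ z : X, (2 - ε < ‖z + x + y‖ ∧ ‖z + y‖ < 1 + ε) ∧ ‖T z‖ < ε := by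
  constructor
  · intro h x y hx hy ε hε
    obtain ⟨z', hz1, hz2, hz3⟩ := h x y hx hy ε hε
    refine ⟨z' - y, ⟨?_, ?_⟩, hz2⟩
    · have e : z' - y + x + y = z' + x := by abel
      rw [e]; exact hz3
    · have e : z' - y + y = z' := by abel
      rw [e, hz1]; linarith
  · intro h x y hx hy ε hε
    have hT0 : (0:ℝ) ≤ ‖T‖ := norm_nonneg T
    set δ : ℝ := min (1/2) (ε / (4 * (1 + ‖T‖))) with hδdef
    have hδ0 : 0 < δ := lt_min (by norm_num) (by positivity)
    have hδh : δ ≤ 1/2 := min_le_left _ _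
    have hδε : δ ≤ ε / (4 * (1 + ‖T‖)) := min_le_right _ _
    have hδεM : 4 * δ + 4 * δ * ‖T‖ ≤ ε := by
      have : 4 * (1 + ‖T‖) * δ ≤ 4 * (1 + ‖T‖) * (ε / (4 * (1 + ‖T‖))) := by
        apply mul_le_mul_of_nonneg_left hδε; positivity
      have e2 : 4 * (1 + ‖T‖) * (ε / (4 * (1 + ‖T‖))) = ε := by field_simp
      nlinarith [this]
    clear hδdef hδε
    clear_value δ
    obtain ⟨z, ⟨h1, h2⟩, h3⟩ := h x y hx hy δ hδ0
    set w : X := z + y with hw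
    have hxy : z + x + y = w + x := by rw [hw]; abel
    rw [hxy] at h1
    have hub : ‖w‖ < 1 + δ := h2
    have hlb : 1 - δ < ‖w‖ := by
      have : ‖w + x‖ ≤ ‖w‖ + ‖x‖ := norm_add_le _ _
      rw [hx] at this; linarith
    have hwpos : 0 < ‖w‖ := by linarith
    have hwhalf : (1:ℝ)/2 ≤ ‖w‖ := by linarith
    have hinv2 : ‖w‖⁻¹ ≤ 2 := by
      rw [inv_le_comm₀ hwpos (by norm_num)]; linarith
    have hinvpos : 0 < ‖w‖⁻¹ := inv_pos.mpr hwpos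
    set z' : X := ‖w‖⁻¹ • w with hz'
    have hz'norm : ‖z'‖ = 1 := by
      rw [hz', norm_smul, norm_inv, norm_norm, inv_mul_cancel₀ (ne_of_gt hwpos)]
    have hdiff : ‖z' - w‖ = |1 - ‖w‖| := by
      have e : z' - w = (‖w‖⁻¹ - 1) • w := by rw [hz', sub_smul, one_smul]
      rw [e, norm_smul, Real.norm_eq_abs, ← abs_of_pos hwpos, ← abs_mul]
      congr 1
      field_simp
      rw [abs_of_pos hwpos]; ring
    have habs : |1 - ‖w‖| < δ := by rw [abs_lt]; constructor <;> linarith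
    have hinvd : |‖w‖⁻¹ - 1| ≤ 2 * δ := by
      have e : ‖w‖⁻¹ - 1 = (1 - ‖w‖) / ‖w‖ := by field_simp
      rw [e, abs_div, abs_of_pos hwpos, div_le_iff₀ hwpos]
      nlinarith
    refine ⟨z', hz'norm, ?_, ?_⟩
    · have eT : T (z' - y) = ‖w‖⁻¹ • T z + (‖w‖⁻¹ - 1) • T y := by
        rw [map_sub, hz', map_smul, hw, map_add, smul_add, sub_smul, one_smul]
        abel
      have hb : ‖T (z' - y)‖ ≤ ‖w‖⁻¹ * ‖T z‖ + |‖w‖⁻¹ - 1| * ‖T y‖ := by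
        rw [eT]
        calc ‖‖w‖⁻¹ • T z + (‖w‖⁻¹ - 1) • T y‖
            ≤ ‖‖w‖⁻¹ • T z‖ + ‖(‖w‖⁻¹ - 1) • T y‖ := norm_add_le _ _
          _ = ‖w‖⁻¹ * ‖T z‖ + |‖w‖⁻¹ - 1| * ‖T y‖ := by
              rw [norm_smul, norm_smul, Real.norm_eq_abs, Real.norm_eq_abs,
                abs_of_pos hinvpos]
      have hTy : ‖T y‖ ≤ ‖T‖ := by
        have := T.le_opNorm y
        rw [hy] at this; linarith
      have hTz : ‖T z‖ < δ := h3
      have h1' : ‖w‖⁻¹ * ‖T z‖ ≤ 2 * δ := by nlinarith [norm_nonneg (T z)]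
      have h2' : |‖w‖⁻¹ - 1| * ‖T y‖ ≤ 2 * δ * ‖T‖ := by
        apply mul_le_mul hinvd hTy (norm_nonneg _) (by linarith)
      have : ‖T (z' - y)‖ ≤ 2 * δ + 2 * δ * ‖T‖ := by linarith
      have hfin : 2 * δ + 2 * δ * ‖T‖ < ε := by linarith
      linarith
    · have : ‖w + x‖ ≤ ‖z' + x‖ + ‖w - z'‖ := by
        calc ‖w + x‖ = ‖(z' + x) + (w - z')‖ := by congr 1; abel
          _ ≤ ‖z' + x‖ + ‖w - z'‖ := norm_add_le _ _
      have hwz : ‖w - z'‖ < δ := by rw [norm_sub_rev, hdiff]; exact habs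
      have hde : 2 * δ ≤ ε := by nlinarith [hδεM, hδ0.le, hT0]
      linarith
end

section
/- Let X be a Banach space with the Daugavet property and T a narrow operator on X. For any x, y ∈ S(X), ε > 0, and any slice S of B(X) containing y, there exists v ∈ S with ‖x + v‖ > 2 − ε and ‖T(y − v)‖ < ε. -/
/-- `X` has the Daugavet property: every rank-one operator satisfies the Daugavet equation. -/
def DaugavetPt (X : Type*) [NormedAddCommGroup X] [NormedSpace ℝ X] : Prop :=
  ∀ T : X →L[ℝ] X, Module.finrank ℝ (LinearMap.range (T : X →ₗ[ℝ] X)) = 1 →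
    ‖ContinuousLinearMap.id ℝ X + T‖ = 1 + ‖T‖

set_option maxHeartbeats 1000000 in
/-- If `X` has the Daugavet property and `T` is a narrow operator on `X`
(i.e. `T +̃ x*` is a strong Daugavet operator for every functional `x*`),
then for all `x, y ∈ S(X)`, `ε > 0` and every slice `S(x*, α)` of `B(X)` containing `y`
there is `v` in the slice with `‖x + v‖ > 2 - ε` and `‖T (y - v)‖ < ε`. -/
theorem stmt_12 {X Y : Type*}
    [NormedAddCommGroup X] [NormedSpace ℝ X] [CompleteSpace X]
    [NormedAddCommGroup Y] [NormedSpace ℝ Y] [CompleteSpace Y]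
    (hX : DaugavetPt X) (T : X →L[ℝ] Y)
    (hT : ∀ f : X →L[ℝ] ℝ, ∀ x y : X, ‖x‖ = 1 → ‖y‖ = 1 → ∀ ε > (0 : ℝ),
      ∃ z : X, ‖z‖ = 1 ∧ ‖T (z - y)‖ + |f (z - y)| < ε ∧ 2 - ε < ‖z + x‖) :
    ∀ x y : X, ‖x‖ = 1 → ‖y‖ = 1 → ∀ ε > (0 : ℝ),
      ∀ f : X →L[ℝ] ℝ, ‖f‖ = 1 → ∀ α > (0 : ℝ), 1 - α ≤ f y →
        ∃ v : X, ‖v‖ ≤ 1 ∧ 1 - α ≤ f v ∧ 2 - ε < ‖x + v‖ ∧ ‖T (y - v)‖ < ε := by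
  intro x y hx hy ε hε f hf α hα hfy
  set δ : ℝ := min ε 1 with hδdef
  have hδ : 0 < δ := lt_min hε one_pos
  have hδε : δ ≤ ε := min_le_left _ _
  have hδ1 : δ ≤ 1 := min_le_right _ _
  have hTnn : (0:ℝ) ≤ ‖T‖ := norm_nonneg T
  set C : ℝ := α + 2 + 2 * ‖T‖ with hC
  have hCpos : 0 < C := by positivity
  set ε' : ℝ := δ * α / C with hε'def
  have hε'pos : 0 < ε' := by positivity
  set t : ℝ := δ / C with htdef
  have htpos : 0 < t := by positivity
  have ht1 : t ≤ 1 := by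
    rw [htdef, div_le_one hCpos]; nlinarith
  have ht1' : (0:ℝ) ≤ 1 - t := by linarith
  -- a norming element for f
  obtain ⟨u, hu1, hu2⟩ : ∃ u : X, ‖u‖ ≤ 1 ∧ 1 - ε' < f u := by
    have h1 : 1 - ε' < ‖f‖ := by rw [hf]; linarith
    obtain ⟨u, hu, hu'⟩ := f.exists_lt_apply_of_lt_opNorm h1
    rcases le_or_gt 0 (f u) with h | h
    · exact ⟨u, hu.le, by rwa [Real.norm_eq_abs, abs_of_nonneg h] at hu'⟩
    · refine ⟨-u, by simpa using hu.le, ?_⟩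
      rw [map_neg]
      rwa [Real.norm_eq_abs, abs_of_neg h] at hu'
  obtain ⟨z, hz1, hz2, hz3⟩ := hT f x y hx hy ε' hε'pos
  have hTz : ‖T (z - y)‖ < ε' := by
    have := abs_nonneg (f (z - y)); linarith
  have hfz : |f (z - y)| < ε' := by
    have := norm_nonneg (T (z - y)); linarith
  refine ⟨(1 - t) • z + t • u, ?_, ?_, ?_, ?_⟩
  · calc ‖(1 - t) • z + t • u‖ ≤ ‖(1 - t) • z‖ + ‖t • u‖ := norm_add_le _ _
      _ = (1 - t) * ‖z‖ + t * ‖u‖ := by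
          rw [norm_smul, norm_smul, Real.norm_eq_abs, Real.norm_eq_abs,
            abs_of_nonneg ht1', abs_of_nonneg htpos.le]
      _ ≤ 1 := by rw [hz1]; nlinarith
  · have hfz' : f y - ε' ≤ f z := by
      have h1 : f z - f y = f (z - y) := by rw [map_sub]
      have h2 := abs_le.mp hfz.le
      linarith [h2.1, h2.2]
    have hfv : f ((1 - t) • z + t • u) = (1 - t) * f z + t * f u := by
      simp [map_add, map_smul, smul_eq_mul]
    rw [hfv]
    have htα : t * α = ε' := by
      rw [htdef, hε'def]; ring
    nlinarith [hfz', hu2, hfy]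
  · have heq : x + ((1 - t) • z + t • u) = (z + x) + t • (u - z) := by
      module
    have key : ‖z + x‖ - t * ‖u - z‖ ≤ ‖x + ((1 - t) • z + t • u)‖ := by
      rw [heq]
      have h := norm_le_add_norm_add (z + x) (t • (u - z))
      have hns : ‖t • (u - z)‖ = t * ‖u - z‖ := by
        rw [norm_smul, Real.norm_eq_abs, abs_of_nonneg htpos.le]
      linarith
    have huz : ‖u - z‖ ≤ 2 := by
      calc ‖u - z‖ ≤ ‖u‖ + ‖z‖ := norm_sub_le _ _
        _ ≤ 2 := by rw [hz1]; linarith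
    have hbound : ε' + 2 * t ≤ δ := by
      have h : ε' + 2 * t = δ * (α + 2) / C := by rw [hε'def, htdef]; ring
      rw [h, div_le_iff₀ hCpos]; nlinarith
    have htu : t * ‖u - z‖ ≤ 2 * t := by nlinarith
    linarith
  · have heq : y - ((1 - t) • z + t • u) = (1 - t) • (y - z) + t • (y - u) := by
      module
    rw [heq]
    have h2 : ‖T ((1 - t) • (y - z) + t • (y - u))‖
        ≤ (1 - t) * ‖T (y - z)‖ + t * ‖T (y - u)‖ := by
      calc ‖T ((1 - t) • (y - z) + t • (y - u))‖
          ≤ ‖T ((1 - t) • (y - z))‖ + ‖T (t • (y - u))‖ := by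
            rw [map_add]; exact norm_add_le _ _
        _ = (1 - t) * ‖T (y - z)‖ + t * ‖T (y - u)‖ := by
            rw [map_smul, map_smul, norm_smul, norm_smul, Real.norm_eq_abs,
              Real.norm_eq_abs, abs_of_nonneg ht1', abs_of_nonneg htpos.le]
    have hTyz : ‖T (y - z)‖ < ε' := by
      rw [← neg_sub z y, map_neg, norm_neg]; exact hTz
    have hTyu : ‖T (y - u)‖ ≤ 2 * ‖T‖ := by
      calc ‖T (y - u)‖ ≤ ‖T‖ * ‖y - u‖ := T.le_opNorm _
        _ ≤ ‖T‖ * 2 := by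
            gcongr
            calc ‖y - u‖ ≤ ‖y‖ + ‖u‖ := norm_sub_le _ _
              _ ≤ 2 := by rw [hy]; linarith
        _ = 2 * ‖T‖ := by ring
    have hbound : ε' + 2 * t * ‖T‖ < δ := by
      have h : ε' + 2 * t * ‖T‖ = δ * (α + 2 * ‖T‖) / C := by
        rw [hε'def, htdef]; ring
      rw [h, div_lt_iff₀ hCpos]; nlinarith
    have e1 : (1 - t) * ‖T (y - z)‖ ≤ ‖T (y - z)‖ := by
      nlinarith [norm_nonneg (T (y - z))]
    have e2 : t * ‖T (y - u)‖ ≤ t * (2 * ‖T‖) := by nlinarith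
    linarith
end

section
/- Let X be a Banach space with the Daugavet property, T a narrow operator on X, and U = λ₁S₁ + ⋯ + λₙSₙ ⊆ B(X) a convex combination of slices S₁, …, Sₙ of B(X) (λₖ ≥ 0, Σλₖ = 1). Then for every ε > 0, every x ∈ S(X) and every w ∈ U there exists u ∈ U with ‖u + x‖ > 2 − ε and ‖T(w − u)‖ < ε. -/
set_option maxHeartbeats 2000000

private lemma unit_approx {X Y : Type*} [NormedAddCommGroup X] [NormedSpace ℝ X]
    [NormedAddCommGroup Y] [NormedSpace ℝ Y]
    (T : X →L[ℝ] Y)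
    (hT : ∀ f : X →L[ℝ] ℝ, ∀ x y : X, ‖x‖ = 1 → ‖y‖ = 1 → ∀ ε > (0 : ℝ),
      ∃ z : X, ‖z‖ = 1 ∧ ‖T (z - y)‖ + |f (z - y)| < ε ∧ 2 - ε < ‖z + x‖)
    (f : X →L[ℝ] ℝ) (hf : ‖f‖ = 1) (x₀ : X) (hx₀ : ‖x₀‖ = 1)
    (v : X) (hv : ‖v‖ ≤ 1) (δ : ℝ) (hδ : 0 < δ) (hδ2 : δ ≤ 1/2) :
    ∃ y : X, ‖y‖ = 1 ∧ f v - 2*δ ≤ f y ∧ ‖T (y - v)‖ ≤ δ*(1+‖T‖) := by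
  classical
  set yh : X := if h : v = 0 then x₀ else ‖v‖⁻¹ • v with hyhdef
  have h1 : ‖yh‖ = 1 := by
    by_cases h : v = 0
    · simp [hyhdef, h, hx₀]
    · simp only [hyhdef, dif_neg h]
      rw [norm_smul, norm_inv, norm_norm, inv_mul_cancel₀ (norm_ne_zero_iff.2 h)]
  have h2 : ‖v‖ • yh = v := by
    by_cases h : v = 0
    · simp [h]
    · simp only [hyhdef, dif_neg h, smul_smul]
      rw [mul_inv_cancel₀ (norm_ne_zero_iff.2 h), one_smul]
  have h1' : ‖-yh‖ = 1 := by rwa [norm_neg]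
  obtain ⟨z, hz1, hz2, hz3⟩ := hT f yh (-yh) h1 h1' δ hδ
  rw [sub_neg_eq_add] at hz2
  set t : ℝ := (1 - ‖v‖)/2 with htdef
  have ht0 : 0 ≤ t := by simp only [htdef]; linarith
  have ht1 : t ≤ 1/2 := by
    have := norm_nonneg v
    simp only [htdef]; linarith
  set u' : X := v + t • (z + yh) with hu'def
  have key : u' = (1 - t) • yh + t • z := by
    have h3 : (1 : ℝ) - t = ‖v‖ + t := by simp only [htdef]; ring
    rw [hu'def, ← h2, h3, add_smul, smul_add]
    abel
  have hu'le : ‖u'‖ ≤ 1 := by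
    rw [key]
    calc ‖(1 - t) • yh + t • z‖ ≤ ‖(1 - t) • yh‖ + ‖t • z‖ := norm_add_le _ _
    _ = |1 - t| * 1 + |t| * 1 := by rw [norm_smul, norm_smul, h1, hz1]; simp [Real.norm_eq_abs]
    _ = (1 - t) + t := by rw [abs_of_nonneg (by linarith : (0:ℝ) ≤ 1 - t), abs_of_nonneg ht0]; ring
    _ = 1 := by ring
  have hzy : z + yh ≠ 0 := by
    intro h
    rw [h, norm_zero] at hz3
    linarith
  obtain ⟨g, hg1, hg2⟩ := exists_dual_vector ℝ (z + yh) (norm_ne_zero_iff.mpr hzy)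
  have hgz : (1 : ℝ) - δ < g z := by
    have hb : g yh ≤ 1 := by
      calc g yh ≤ |g yh| := le_abs_self _
      _ ≤ ‖g‖ * ‖yh‖ := g.le_opNorm yh
      _ = 1 := by rw [hg1, h1, mul_one]
    have : g z + g yh = ‖z + yh‖ := by rw [← map_add]; exact_mod_cast hg2
    linarith
  have hgyh : (1 : ℝ) - δ < g yh := by
    have hb : g z ≤ 1 := by
      calc g z ≤ |g z| := le_abs_self _
      _ ≤ ‖g‖ * ‖z‖ := g.le_opNorm z
      _ = 1 := by rw [hg1, hz1, mul_one]
    have : g z + g yh = ‖z + yh‖ := by rw [← map_add]; exact_mod_cast hg2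
    linarith
  have hu'ge : 1 - δ < ‖u'‖ := by
    have hgu : g u' = (1 - t) * g yh + t * g z := by rw [key]; simp
    have h4 : (1 - t) * (1 - δ) + t * (1 - δ) ≤ (1 - t) * g yh + t * g z := by
      have := mul_le_mul_of_nonneg_left hgyh.le (by linarith : (0:ℝ) ≤ 1 - t)
      have := mul_le_mul_of_nonneg_left hgz.le ht0
      nlinarith
    have h5 : g u' ≤ ‖u'‖ := by
      calc g u' ≤ |g u'| := le_abs_self _
      _ ≤ ‖g‖ * ‖u'‖ := g.le_opNorm u'
      _ = ‖u'‖ := by rw [hg1, one_mul]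
    nlinarith
  have hu'pos : 0 < ‖u'‖ := by linarith
  have hu'ne : u' ≠ 0 := norm_pos_iff.mp hu'pos
  clear_value yh t u'
  refine ⟨‖u'‖⁻¹ • u', ?_, ?_, ?_⟩
  · rw [norm_smul, norm_inv, norm_norm, inv_mul_cancel₀ (ne_of_gt hu'pos)]
  · -- f value
    have hd : ‖‖u'‖⁻¹ • u' - u'‖ ≤ δ := by
      have : ‖u'‖⁻¹ • u' - u' = (‖u'‖⁻¹ - 1) • u' := by rw [sub_smul, one_smul]
      rw [this, norm_smul, Real.norm_eq_abs]
      have hinv : (1:ℝ) ≤ ‖u'‖⁻¹ := (one_le_inv₀ hu'pos).mpr hu'le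
      rw [abs_of_nonneg (by linarith)]
      have : (‖u'‖⁻¹ - 1) * ‖u'‖ = 1 - ‖u'‖ := by
        field_simp
      rw [this]; linarith
    have hfu' : f v - δ ≤ f u' := by
      have : f u' = f v + t * f (z + yh) := by rw [hu'def]; simp [mul_add]
      have habs : |f (z + yh)| ≤ δ := by
        have := norm_nonneg (T (z + yh))
        linarith [hz2]
      have h6 : -δ ≤ t * f (z + yh) := by
        have h7 : -(δ) ≤ f (z + yh) := by
          have := abs_le.mp habs; linarith [this.1]
        nlinarith [abs_le.mp habs]
      linarith
    have hfd : |f (‖u'‖⁻¹ • u' - u')| ≤ δ := by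
      calc |f (‖u'‖⁻¹ • u' - u')| ≤ ‖f‖ * ‖‖u'‖⁻¹ • u' - u'‖ := f.le_opNorm _
      _ ≤ 1 * δ := by rw [hf]; exact mul_le_mul_of_nonneg_left hd (by norm_num)
      _ = δ := one_mul δ
    have : f (‖u'‖⁻¹ • u') = f u' + f (‖u'‖⁻¹ • u' - u') := by simp
    have := abs_le.mp hfd
    linarith [this.1]
  · -- T value
    have hd : ‖‖u'‖⁻¹ • u' - u'‖ ≤ δ := by
      have : ‖u'‖⁻¹ • u' - u' = (‖u'‖⁻¹ - 1) • u' := by rw [sub_smul, one_smul]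
      rw [this, norm_smul, Real.norm_eq_abs]
      have hinv : (1:ℝ) ≤ ‖u'‖⁻¹ := (one_le_inv₀ hu'pos).mpr hu'le
      rw [abs_of_nonneg (by linarith)]
      have : (‖u'‖⁻¹ - 1) * ‖u'‖ = 1 - ‖u'‖ := by field_simp
      rw [this]; linarith
    have e1 : ‖u'‖⁻¹ • u' - v = (‖u'‖⁻¹ • u' - u') + t • (z + yh) := by
      rw [hu'def]; abel
    have hTz : ‖T (z + yh)‖ ≤ δ := by
      have := abs_nonneg (f (z + yh)); linarith [hz2]
    calc ‖T (‖u'‖⁻¹ • u' - v)‖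
        = ‖T ((‖u'‖⁻¹ • u' - u') + t • (z + yh))‖ := by rw [e1]
    _ = ‖T (‖u'‖⁻¹ • u' - u') + t • T (z + yh)‖ := by rw [map_add, map_smul]
    _ ≤ ‖T (‖u'‖⁻¹ • u' - u')‖ + ‖t • T (z + yh)‖ := norm_add_le _ _
    _ ≤ ‖T‖ * δ + t * δ := by
        refine add_le_add ?_ ?_
        · exact (T.le_opNorm _).trans (mul_le_mul_of_nonneg_left hd (norm_nonneg T))
        · rw [norm_smul, Real.norm_eq_abs, abs_of_nonneg ht0]
          exact mul_le_mul_of_nonneg_left hTz ht0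
    _ ≤ δ * (1 + ‖T‖) := by
        have h9 : t * δ ≤ δ := by nlinarith
        linarith

/-- If `X` has the Daugavet property, `T` is narrow, and
`U = λ₁ S₁ + ⋯ + λₙ Sₙ` is a convex combination of slices `Sₖ = S(fₖ, αₖ)` of `B(X)`,
then for every `ε > 0`, `x ∈ S(X)` and `w ∈ U` there is `u ∈ U`
with `‖u + x‖ > 2 - ε` and `‖T (w - u)‖ < ε`. -/
theorem stmt_13 {X Y : Type*}
    [NormedAddCommGroup X] [NormedSpace ℝ X] [CompleteSpace X]
    [NormedAddCommGroup Y] [NormedSpace ℝ Y] [CompleteSpace Y]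
    (hX : DaugavetPt X) (T : X →L[ℝ] Y)
    (hT : ∀ f : X →L[ℝ] ℝ, ∀ x y : X, ‖x‖ = 1 → ‖y‖ = 1 → ∀ ε > (0 : ℝ),
      ∃ z : X, ‖z‖ = 1 ∧ ‖T (z - y)‖ + |f (z - y)| < ε ∧ 2 - ε < ‖z + x‖)
    (n : ℕ) (f : Fin n → X →L[ℝ] ℝ) (hf : ∀ k, ‖f k‖ = 1)
    (α : Fin n → ℝ) (hα : ∀ k, 0 < α k)
    (lam : Fin n → ℝ) (hlam : ∀ k, 0 ≤ lam k) (hsum : ∑ k, lam k = 1) :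
    ∀ ε > (0 : ℝ), ∀ x : X, ‖x‖ = 1 →
      ∀ w : X,
        (∃ v : Fin n → X, (∀ k, ‖v k‖ ≤ 1 ∧ 1 - α k ≤ f k (v k)) ∧ w = ∑ k, lam k • v k) →
        ∃ u : X,
          (∃ v : Fin n → X, (∀ k, ‖v k‖ ≤ 1 ∧ 1 - α k ≤ f k (v k)) ∧ u = ∑ k, lam k • v k) ∧
          2 - ε < ‖u + x‖ ∧ ‖T (w - u)‖ < ε := by
  classical
  intro ε hε x hx w hw
  obtain ⟨v, hv, rfl⟩ := hw
  have hn : n ≠ 0 := by rintro rfl; simp at hsum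
  have hpos : 0 < n := Nat.pos_of_ne_zero hn
  have hne : (Finset.univ : Finset (Fin n)).Nonempty := ⟨⟨0, hpos⟩, Finset.mem_univ _⟩
  set M : ℝ := ‖T‖ with hMdef
  have hM0 : 0 ≤ M := norm_nonneg T
  set θ : ℝ := min (1/2) (ε / (8 * (M + 1))) with hθdef
  have hθpos : 0 < θ := lt_min (by norm_num) (by positivity)
  have hθ2 : θ ≤ 1/2 := min_le_left _ _
  have hθ3 : 2 * θ * M ≤ ε / 4 := by
    have h1 : θ ≤ ε / (8 * (M + 1)) := min_le_right _ _
    have h2 : ε / (8 * (M + 1)) * (8 * (M + 1)) = ε := div_mul_cancel₀ _ (by positivity)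
    have h3 : θ * (2 * M) ≤ ε / (8 * (M + 1)) * (2 * M) :=
      mul_le_mul_of_nonneg_right h1 (by linarith)
    have h4 : 0 ≤ ε / (8 * (M + 1)) := div_nonneg hε.le (by positivity)
    linarith
  set A : ℝ := Finset.univ.inf' hne α with hAdef
  have hApos : 0 < A := by
    rw [hAdef]
    exact (Finset.lt_inf'_iff hne).mpr fun k _ => hα k
  have hAle : ∀ k, A ≤ α k := fun k => Finset.inf'_le α (Finset.mem_univ k)
  set δ : ℝ := min (min (ε / (4 * (2 + M))) (ε / (3 * n + 3)))
      (min (1 / (3 * n + 3)) (θ * A / 6)) with hδdef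
  have h3n : (0:ℝ) < 3 * n + 3 := by positivity
  have hδpos : 0 < δ :=
    lt_min (lt_min (by positivity) (by positivity)) (lt_min (by positivity) (by positivity))
  have hδ1 : δ ≤ ε / (4 * (2 + M)) := le_trans (min_le_left _ _) (min_le_left _ _)
  have hδ2 : δ ≤ ε / (3 * n + 3) := le_trans (min_le_left _ _) (min_le_right _ _)
  have hδ3 : δ ≤ 1 / (3 * n + 3) := le_trans (min_le_right _ _) (min_le_left _ _)
  have hδ4 : δ ≤ θ * A / 6 := le_trans (min_le_right _ _) (min_le_right _ _)
  have hncast : (0:ℝ) ≤ (n:ℝ) := Nat.cast_nonneg n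
  have hδhalf : δ ≤ 1 / 2 := by
    have h2 : (1:ℝ) / (3 * n + 3) ≤ 1 / 2 := by
      rw [div_le_div_iff₀ h3n (by norm_num)]
      linarith
    linarith
  -- Step 1: deepen each v k into its slice
  have hVt : ∀ k : Fin n, ∃ vt : X, ‖vt‖ ≤ 1 ∧ 1 - α k + θ * α k / 2 ≤ f k vt ∧
      ‖T (vt - v k)‖ ≤ 2 * θ * M := by
    intro k
    have hmin : 0 < min (α k) 1 := lt_min (hα k) one_pos
    have hlt : 1 - min (α k) 1 / 2 < ‖f k‖ := by rw [hf k]; linarith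
    obtain ⟨b, hb1, hb2⟩ := (f k).exists_lt_apply_of_lt_opNorm hlt
    rw [Real.norm_eq_abs] at hb2
    set b' : X := if 0 ≤ f k b then b else -b with hb'def
    have hb'1 : ‖b'‖ ≤ 1 := by
      rw [hb'def]; split <;> simp [hb1.le]
    have hb'2 : 1 - min (α k) 1 / 2 < f k b' := by
      rw [hb'def]; split
      · next h => rwa [abs_of_nonneg h] at hb2
      · next h => push_neg at h; rw [map_neg]; rwa [abs_of_neg h] at hb2
    refine ⟨(1 - θ) • v k + θ • b', ?_, ?_, ?_⟩
    · calc ‖(1 - θ) • v k + θ • b'‖ ≤ ‖(1 - θ) • v k‖ + ‖θ • b'‖ := norm_add_le _ _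
      _ = (1 - θ) * ‖v k‖ + θ * ‖b'‖ := by
          rw [norm_smul, norm_smul, Real.norm_eq_abs, Real.norm_eq_abs,
            abs_of_nonneg (by linarith : (0:ℝ) ≤ 1 - θ), abs_of_nonneg hθpos.le]
      _ ≤ (1 - θ) * 1 + θ * 1 := by
          gcongr
          · linarith
          · exact (hv k).1
      _ = 1 := by ring
    · have he : f k ((1 - θ) • v k + θ • b') = (1 - θ) * f k (v k) + θ * f k b' := by simp
      rw [he]
      have h1 : (1 - θ) * (1 - α k) ≤ (1 - θ) * f k (v k) :=
        mul_le_mul_of_nonneg_left (hv k).2 (by linarith)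
      have h2 : θ * (1 - min (α k) 1 / 2) ≤ θ * f k b' :=
        mul_le_mul_of_nonneg_left hb'2.le hθpos.le
      have h3 : min (α k) 1 ≤ α k := min_le_left _ _
      have h4 : θ * min (α k) 1 ≤ θ * α k := mul_le_mul_of_nonneg_left h3 hθpos.le
      linarith
    · have he : (1 - θ) • v k + θ • b' - v k = θ • (b' - v k) := by
        rw [sub_smul, one_smul, smul_sub]; abel
      rw [he, map_smul, norm_smul, Real.norm_eq_abs, abs_of_nonneg hθpos.le]
      calc θ * ‖T (b' - v k)‖ ≤ θ * (M * ‖b' - v k‖) :=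
            mul_le_mul_of_nonneg_left (T.le_opNorm _) hθpos.le
      _ ≤ θ * (M * 2) := by
          gcongr
          calc ‖b' - v k‖ ≤ ‖b'‖ + ‖v k‖ := norm_sub_le _ _
          _ ≤ 1 + 1 := add_le_add hb'1 (hv k).1
          _ = 2 := by norm_num
      _ = 2 * θ * M := by ring
  choose vt hvt1 hvt2 hvt3 using hVt
  -- Step 2: unit vectors deep in each slice, T-close to v k
  have hY : ∀ k : Fin n, ∃ y : X, ‖y‖ = 1 ∧ 1 - α k + δ ≤ f k y ∧
      ‖T (y - v k)‖ ≤ 2 * θ * M + δ * (1 + M) := by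
    intro k
    obtain ⟨y, hy1, hy2, hy3⟩ :=
      unit_approx T hT (f k) (hf k) x hx (vt k) (hvt1 k) δ hδpos hδhalf
    refine ⟨y, hy1, ?_, ?_⟩
    · have h1 : θ * A ≤ θ * α k := mul_le_mul_of_nonneg_left (hAle k) hθpos.le
      linarith [hvt2 k]
    · have he : y - v k = (y - vt k) + (vt k - v k) := by abel
      calc ‖T (y - v k)‖ = ‖T (y - vt k) + T (vt k - v k)‖ := by rw [he, map_add]
      _ ≤ ‖T (y - vt k)‖ + ‖T (vt k - v k)‖ := norm_add_le _ _
      _ ≤ δ * (1 + M) + 2 * θ * M := add_le_add hy3 (hvt3 k)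
      _ = 2 * θ * M + δ * (1 + M) := by ring
  choose y hy1 hy2 hy3 using hY
  set B : ℝ := 2 * θ * M + δ * (2 + M) with hBdef
  -- Main induction
  have main : ∀ j : ℕ, j ≤ n → ∃ z : Fin n → X,
      (∀ k : Fin n, (k : ℕ) < j →
        ‖z k‖ ≤ 1 ∧ 1 - α k ≤ f k (z k) ∧ ‖T (z k - v k)‖ ≤ B) ∧
      1 + (∑ k ∈ Finset.univ.filter (fun k : Fin n => (k : ℕ) < j), lam k) - 3 * j * δ ≤
        ‖x + ∑ k ∈ Finset.univ.filter (fun k : Fin n => (k : ℕ) < j), lam k • z k‖ := by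
    intro j
    induction j with
    | zero =>
      intro _
      refine ⟨fun _ => 0, fun k hk => absurd hk (Nat.not_lt_zero _), ?_⟩
      simp [hx]
    | succ j ih =>
      intro hj
      have hjn : j < n := hj
      obtain ⟨z, hzgood, hznorm⟩ := ih (Nat.le_of_succ_le hj)
      set σ : ℝ := ∑ k ∈ Finset.univ.filter (fun k : Fin n => (k : ℕ) < j), lam k with hσdef
      set S : X := x + ∑ k ∈ Finset.univ.filter (fun k : Fin n => (k : ℕ) < j), lam k • z k
        with hSdef
      have hσ0 : 0 ≤ σ := Finset.sum_nonneg fun k _ => hlam k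
      have hσ1 : σ ≤ 1 := by
        rw [hσdef, ← hsum]
        exact Finset.sum_le_sum_of_subset_of_nonneg (Finset.filter_subset _ _)
          fun k _ _ => hlam k
      have hjδ : 3 * (j:ℝ) * δ ≤ 3 * (n:ℝ) * δ := by
        have h : (j:ℝ) ≤ (n:ℝ) := Nat.cast_le.mpr hjn.le
        have := mul_le_mul_of_nonneg_right (by linarith : 3 * (j:ℝ) ≤ 3 * (n:ℝ)) hδpos.le
        linarith
      have hnδ : 3 * (n:ℝ) * δ < 1 := by
        have h1 : 3 * (n:ℝ) * δ ≤ 3 * (n:ℝ) * (1 / (3 * n + 3)) :=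
          mul_le_mul_of_nonneg_left hδ3 (by positivity)
        have h2 : 3 * (n:ℝ) * (1 / (3 * n + 3)) < 1 := by
          rw [mul_one_div, div_lt_one h3n]; linarith
        linarith
      have hSpos : 0 < ‖S‖ := by linarith [hznorm]
      have hSne : S ≠ 0 := norm_pos_iff.mp hSpos
      have hSle : ‖S‖ ≤ 2 := by
        rw [hSdef]
        calc ‖x + ∑ k ∈ Finset.univ.filter (fun k : Fin n => (k : ℕ) < j), lam k • z k‖
            ≤ ‖x‖ + ‖∑ k ∈ Finset.univ.filter (fun k : Fin n => (k : ℕ) < j), lam k • z k‖ :=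
              norm_add_le _ _
        _ ≤ 1 + σ := by
            rw [hx]
            gcongr
            calc ‖∑ k ∈ Finset.univ.filter (fun k : Fin n => (k : ℕ) < j), lam k • z k‖
                ≤ ∑ k ∈ Finset.univ.filter (fun k : Fin n => (k : ℕ) < j), ‖lam k • z k‖ :=
                  norm_sum_le _ _
            _ ≤ ∑ k ∈ Finset.univ.filter (fun k : Fin n => (k : ℕ) < j), lam k := by
                refine Finset.sum_le_sum fun k hk => ?_
                rw [norm_smul, Real.norm_eq_abs, abs_of_nonneg (hlam k)]
                have hk' : (k:ℕ) < j := by simpa using (Finset.mem_filter.mp hk).2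
                calc lam k * ‖z k‖ ≤ lam k * 1 :=
                      mul_le_mul_of_nonneg_left ((hzgood k hk').1) (hlam k)
                _ = lam k := mul_one _
            _ = σ := rfl
        _ ≤ 2 := by linarith
      set xj : X := ‖S‖⁻¹ • S with hxjdef
      have hxj : ‖xj‖ = 1 := by
        rw [hxjdef, norm_smul, norm_inv, norm_norm, inv_mul_cancel₀ (ne_of_gt hSpos)]
      have hxjS : ‖S‖ • xj = S := by
        rw [hxjdef, smul_smul, mul_inv_cancel₀ (ne_of_gt hSpos), one_smul]
      set kj : Fin n := ⟨j, hjn⟩ with hkjdef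
      obtain ⟨z', hz'1, hz'2, hz'3⟩ := hT (f kj) xj (y kj) hxj (hy1 kj) δ hδpos
      have hTz' : ‖T (z' - y kj)‖ ≤ δ := by
        have := abs_nonneg (f kj (z' - y kj)); linarith
      have hfz' : |f kj (z' - y kj)| ≤ δ := by
        have := norm_nonneg (T (z' - y kj)); linarith
      refine ⟨Function.update z kj z', ?_, ?_⟩
      · intro k hk
        by_cases hkj : k = kj
        · rw [hkj, Function.update_self]
          refine ⟨le_of_eq hz'1, ?_, ?_⟩
          · have h1 : f kj z' = f kj (y kj) + f kj (z' - y kj) := by simp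
            have h2 := abs_le.mp hfz'
            have h3 := hy2 kj
            linarith [h2.1]
          · have he : z' - v kj = (z' - y kj) + (y kj - v kj) := by abel
            calc ‖T (z' - v kj)‖ = ‖T (z' - y kj) + T (y kj - v kj)‖ := by rw [he, map_add]
            _ ≤ ‖T (z' - y kj)‖ + ‖T (y kj - v kj)‖ := norm_add_le _ _
            _ ≤ δ + (2 * θ * M + δ * (1 + M)) := add_le_add hTz' (hy3 kj)
            _ = B := by rw [hBdef]; ring
        · have hk' : (k:ℕ) < j := by
            have : (k:ℕ) ≠ j := fun h => hkj (Fin.ext h)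
            omega
          rw [Function.update_of_ne hkj]
          exact hzgood k hk'
      · -- norm estimate
        have hfilter : Finset.univ.filter (fun k : Fin n => (k : ℕ) < j + 1) =
            insert kj (Finset.univ.filter (fun k : Fin n => (k : ℕ) < j)) := by
          ext k
          simp only [Finset.mem_filter, Finset.mem_univ, true_and, Finset.mem_insert]
          constructor
          · intro h
            rcases Nat.lt_succ_iff_lt_or_eq.mp h with h | h
            · exact Or.inr (by simpa using h)
            · exact Or.inl (Fin.ext h)
          · rintro (rfl | h)
            · exact Nat.lt_succ_self j
            · exact Nat.lt_succ_of_lt (by simpa using h)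
        have hkjmem : kj ∉ Finset.univ.filter (fun k : Fin n => (k : ℕ) < j) := by
          simp [hkjdef]
        have hsum1 : ∑ k ∈ Finset.univ.filter (fun k : Fin n => (k : ℕ) < j + 1),
            lam k • Function.update z kj z' k = S - x + lam kj • z' := by
          rw [hfilter, Finset.sum_insert hkjmem, Function.update_self]
          have : ∀ k ∈ Finset.univ.filter (fun k : Fin n => (k : ℕ) < j),
              lam k • Function.update z kj z' k = lam k • z k := by
            intro k hk
            have hk' : (k:ℕ) < j := by simpa using (Finset.mem_filter.mp hk).2
            have hkne : k ≠ kj := by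
              intro h; rw [h] at hk'; simp [hkjdef] at hk'
            rw [Function.update_of_ne hkne]
          rw [Finset.sum_congr rfl this, hSdef]
          abel
        have hsum2 : ∑ k ∈ Finset.univ.filter (fun k : Fin n => (k : ℕ) < j + 1), lam k =
            σ + lam kj := by
          rw [hfilter, Finset.sum_insert hkjmem, hσdef]; ring
        rw [hsum1, hsum2]
        have hgoal : x + (S - x + lam kj • z') = S + lam kj • z' := by abel
        rw [hgoal]
        -- dual vector for z' + xj
        have hzxne : z' + xj ≠ 0 := by
          intro h
          rw [h, norm_zero] at hz'3
          linarith
        obtain ⟨g, hg1, hg2⟩ := exists_dual_vector ℝ (z' + xj) (norm_ne_zero_iff.mpr hzxne)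
        have hg2' : g z' + g xj = ‖z' + xj‖ := by rw [← map_add]; exact_mod_cast hg2
        have hgz' : 1 - δ < g z' := by
          have hb : g xj ≤ 1 := by
            calc g xj ≤ |g xj| := le_abs_self _
            _ ≤ ‖g‖ * ‖xj‖ := g.le_opNorm xj
            _ = 1 := by rw [hg1, hxj, mul_one]
          linarith
        have hgxj : 1 - δ < g xj := by
          have hb : g z' ≤ 1 := by
            calc g z' ≤ |g z'| := le_abs_self _
            _ ≤ ‖g‖ * ‖z'‖ := g.le_opNorm z'
            _ = 1 := by rw [hg1, hz'1, mul_one]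
          linarith
        have hgSeq : g S = ‖S‖ * g xj := by
          conv_lhs => rw [← hxjS]
          rw [map_smul, smul_eq_mul]
        have hgS : ‖S‖ * (1 - δ) ≤ g S := by
          rw [hgSeq]
          exact mul_le_mul_of_nonneg_left hgxj.le hSpos.le
        have hlamle : lam kj ≤ 1 := by
          rw [← hsum]
          exact Finset.single_le_sum (fun k _ => hlam k) (Finset.mem_univ kj)
        have hlow : ‖S‖ + lam kj - 3 * δ ≤ ‖S + lam kj • z'‖ := by
          have h1 : g (S + lam kj • z') ≤ ‖S + lam kj • z'‖ := by
            calc g (S + lam kj • z') ≤ |g (S + lam kj • z')| := le_abs_self _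
            _ ≤ ‖g‖ * ‖S + lam kj • z'‖ := g.le_opNorm _
            _ = ‖S + lam kj • z'‖ := by rw [hg1, one_mul]
          have h2 : g (S + lam kj • z') = g S + lam kj * g z' := by simp
          have h3 : lam kj * (1 - δ) ≤ lam kj * g z' :=
            mul_le_mul_of_nonneg_left hgz'.le (hlam kj)
          have p1 : δ * ‖S‖ ≤ δ * 2 := mul_le_mul_of_nonneg_left hSle hδpos.le
          have p2 : δ * lam kj ≤ δ * 1 := mul_le_mul_of_nonneg_left hlamle hδpos.le
          linarith
        push_cast
        linarith [hznorm, hlow]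
  -- Conclusion
  obtain ⟨z, hzgood, hznorm⟩ := main n le_rfl
  have hfilter : Finset.univ.filter (fun k : Fin n => (k : ℕ) < n) =
      (Finset.univ : Finset (Fin n)) :=
    Finset.filter_true_of_mem fun k _ => k.isLt
  rw [hfilter] at hznorm
  refine ⟨∑ k, lam k • z k, ⟨z, fun k => ⟨(hzgood k k.isLt).1, (hzgood k k.isLt).2.1⟩, rfl⟩,
    ?_, ?_⟩
  · have hlt : 3 * (n:ℝ) * δ < ε := by
      have h1 : 3 * (n:ℝ) * δ ≤ 3 * (n:ℝ) * (ε / (3 * n + 3)) := by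
        nlinarith [hncast]
      have h2 : 3 * (n:ℝ) * (ε / (3 * n + 3)) < ε := by
        rw [mul_div_assoc']
        rw [div_lt_iff₀ h3n]
        nlinarith [hε]
      linarith
    rw [hsum] at hznorm
    rw [add_comm]
    linarith
  · have hB : B < ε := by
      have h1 : δ * (2 + M) ≤ ε / (4 * (2 + M)) * (2 + M) :=
        mul_le_mul_of_nonneg_right hδ1 (by linarith)
      have h2 : ε / (4 * (2 + M)) * (2 + M) = ε / 4 := by
        field_simp
      rw [hBdef]
      linarith
    have he : (∑ k, lam k • v k) - ∑ k, lam k • z k = ∑ k, lam k • (v k - z k) := by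
      rw [← Finset.sum_sub_distrib]
      exact Finset.sum_congr rfl fun k _ => by rw [smul_sub]
    rw [he]
    calc ‖T (∑ k, lam k • (v k - z k))‖ = ‖∑ k, lam k • T (v k - z k)‖ := by
          rw [map_sum]
          exact congrArg _ (Finset.sum_congr rfl fun k _ => by rw [map_smul])
    _ ≤ ∑ k, ‖lam k • T (v k - z k)‖ := norm_sum_le _ _
    _ ≤ ∑ k, lam k * B := by
        refine Finset.sum_le_sum fun k _ => ?_
        rw [norm_smul, Real.norm_eq_abs, abs_of_nonneg (hlam k)]
        refine mul_le_mul_of_nonneg_left ?_ (hlam k)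
        have : ‖T (v k - z k)‖ = ‖T (z k - v k)‖ := by
          rw [show v k - z k = -(z k - v k) by abel, map_neg, norm_neg]
        rw [this]
        exact (hzgood k k.isLt).2.2
    _ = B := by rw [← Finset.sum_mul, hsum, one_mul]
    _ < ε := hB
end
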